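/- For every real t and u with t ≠ 1 and t ≠ exp(u(t-1)), the exponential generating function of the Eulerian polynomials satisfies ∑_{n≥0} A_n(t) u^n / n! = (t-1)/(t - exp(u(t-1))), the series converging for |u| sufficiently small. -/

import Mathlib

open scoped Classical

/-- Number of ascents of a permutation of `Fin n`:
positions `j` with `j + 1 < n` and `π j < π (j+1)`. -/
noncomputable def ascentCount {n : ℕ} (π : Equiv.Perm (Fin n)) : ℕ :=
  ((Finset.range (n - 1)).filter (fun j =>
    ∃ h : j + 1 < n, π ⟨j, Nat.lt_of_succ_lt h⟩ < π ⟨j + 1, h⟩)).card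

/-- The Eulerian number `A_{n,k}`: the number of permutations of an `n`-element
linearly ordered set with exactly `k` ascents. -/
noncomputable def eulerian (n k : ℕ) : ℕ :=
  (Finset.univ.filter (fun π : Equiv.Perm (Fin n) => ascentCount π = k)).card

/-- The `n`-th Eulerian polynomial `A_n(t) = ∑_{k=0}^{n-1} A_{n,k} t^k`, with `A_0(t) = 1`. -/
noncomputable def eulerianPoly (n : ℕ) (t : ℝ) : ℝ :=
  if n = 0 then 1 else ∑ k ∈ Finset.range n, (eulerian n k : ℝ) * t ^ k

/-!
Expanding `t ^ #A = ∑_{S ⊆ A} (t - 1) ^ #S` over the ascent sets `A` gives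
`A_n(t) = ∑_S (t - 1) ^ #S · N_n(S)`, where `N_n(S)` counts the permutations with an ascent at every
position of `S`. Split each `S` according to the start `k` of its final run of consecutive
positions, `S = S₀ ∪ [k, n - 1)`: the permutations counted are then exactly those listing a
`k`-element set of values in an order with ascents at `S₀`, followed by the complementary values
in increasing order, so `N_n(S) = (n choose k) · N_k(S₀)`. This yields the recurrence
`A_{n+1}(t) = ∑_{k ≤ n} (n+1 choose k) (t - 1) ^ (n - k) A_k(t)`, which says that the generating
function `F(u) = ∑ A_n(t) u^n / n!` satisfies `t F = F · exp(u (t - 1)) + (t - 1)` as a Cauchy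
product. The series converges for `|u| < 1 / max 1 |t|` because `|A_n(t)| ≤ n! · max 1 |t| ^ n`.
-/

open Finset Equiv
open scoped Nat

section Ascents

variable {α : Type*} [LinearOrder α] {n : ℕ}

def ascents (f : Fin n → α) : Finset ℕ :=
  (range (n - 1)).filter fun j => ∃ h : j + 1 < n, f ⟨j, Nat.lt_of_succ_lt h⟩ < f ⟨j + 1, h⟩

lemma ascentCount_eq_card_ascents (π : Perm (Fin n)) : ascentCount π = #(ascents π) := rfl

lemma mem_ascents {f : Fin n → α} {j : ℕ} :
    j ∈ ascents f ↔ ∃ h : j + 1 < n, f ⟨j, Nat.lt_of_succ_lt h⟩ < f ⟨j + 1, h⟩ := by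
  simp only [ascents, mem_filter, mem_range, and_iff_right_iff_imp]
  rintro ⟨h, -⟩
  omega

lemma ascents_subset_range (f : Fin n → α) : ascents f ⊆ range (n - 1) := filter_subset _ _

lemma ascentCount_le (π : Perm (Fin n)) : ascentCount π ≤ n - 1 := by
  simpa [ascentCount_eq_card_ascents] using card_le_card (ascents_subset_range π)

lemma ascents_comp_of_strictMono {β : Type*} [LinearOrder β] {e : α → β} (he : StrictMono e)
    (f : Fin n → α) : ascents (e ∘ f) = ascents f := by
  ext j
  simp only [mem_ascents, Function.comp_apply, he.lt_iff_lt]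

lemma range_subset_ascents_iff {f : Fin n → α} : range (n - 1) ⊆ ascents f ↔ StrictMono f := by
  cases n with
  | zero => simp [Subsingleton.strictMono]
  | succ n =>
    rw [Fin.strictMono_iff_lt_succ]
    refine ⟨fun h i => ?_, fun h j hj => ?_⟩
    · obtain ⟨_, hi⟩ := mem_ascents.1 (h (mem_range.2 i.isLt))
      exact hi
    · rw [Nat.add_sub_cancel, mem_range] at hj
      exact mem_ascents.2 ⟨by omega, h ⟨j, hj⟩⟩

variable {k m : ℕ}

lemma mem_ascents_comp_castAdd {f : Fin (k + m) → α} {j : ℕ} :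
    j ∈ ascents (f ∘ Fin.castAdd m) ↔ j + 1 < k ∧ j ∈ ascents f := by
  simp only [mem_ascents, Function.comp_apply]
  exact ⟨fun ⟨h, hj⟩ => ⟨h, by omega, hj⟩, fun ⟨h, _, hj⟩ => ⟨h, hj⟩⟩

lemma mem_ascents_comp_natAdd {f : Fin (k + m) → α} {j : ℕ} :
    j ∈ ascents (f ∘ Fin.natAdd k) ↔ k + j ∈ ascents f := by
  simp only [mem_ascents, Function.comp_apply]
  exact ⟨fun ⟨h, hj⟩ => ⟨by omega, hj⟩, fun ⟨h, hj⟩ => ⟨by omega, hj⟩⟩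

lemma union_Ico_subset_ascents_iff {f : Fin (k + m) → α} {S : Finset ℕ}
    (hS : S ⊆ range (k - 1)) :
    S ∪ Ico k (k + m - 1) ⊆ ascents f ↔
      S ⊆ ascents (f ∘ Fin.castAdd m) ∧ StrictMono (f ∘ Fin.natAdd k) := by
  have hSk : ∀ j ∈ S, j + 1 < k := fun j hj => by have := mem_range.1 (hS hj); omega
  rw [union_subset_iff, ← range_subset_ascents_iff]
  refine and_congr ⟨fun h j hj => ?_, fun h j hj => ?_⟩ ⟨fun h j hj => ?_, fun h j hj => ?_⟩
  · exact mem_ascents_comp_castAdd.2 ⟨hSk j hj, h hj⟩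
  · exact (mem_ascents_comp_castAdd.1 (h hj)).2
  · rw [mem_range] at hj
    exact mem_ascents_comp_natAdd.2 (h (mem_Ico.2 ⟨by omega, by omega⟩))
  · rw [mem_Ico] at hj
    obtain ⟨i, rfl⟩ := Nat.exists_eq_add_of_le hj.1
    exact mem_ascents_comp_natAdd.1 (h (mem_range.2 (by omega)))

end Ascents

section IncreasingTail

variable {k m : ℕ}

lemma card_compl_of_card_eq {T : Finset (Fin (k + m))} (hT : #T = k) : #Tᶜ = m := by
  rw [card_compl, hT, Fintype.card_fin, Nat.add_sub_cancel_left]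

/-- The permutation whose first `k` values run through `T` in the relative order given by `σ`
and whose last `m` values run through `Tᶜ` increasingly. -/
def withIncreasingTail (T : Finset (Fin (k + m))) (hT : #T = k) (σ : Perm (Fin k)) :
    Perm (Fin (k + m)) :=
  finSumFinEquiv.symm.trans <|
    (sumCongr (σ.trans (T.orderIsoOfFin hT).toEquiv)
      ((Tᶜ.orderIsoOfFin (card_compl_of_card_eq hT)).toEquiv.trans
        (subtypeEquivRight fun _ => mem_compl))).trans
    (sumCompl (· ∈ T))

variable {T : Finset (Fin (k + m))} {hT : #T = k} {σ : Perm (Fin k)}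

lemma withIncreasingTail_castAdd (i : Fin k) :
    withIncreasingTail T hT σ (Fin.castAdd m i) = T.orderEmbOfFin hT (σ i) := by
  simp [withIncreasingTail]

lemma withIncreasingTail_natAdd (j : Fin m) :
    withIncreasingTail T hT σ (Fin.natAdd k j) =
      Tᶜ.orderEmbOfFin (card_compl_of_card_eq hT) j := by
  simp [withIncreasingTail]

lemma withIncreasingTail_comp_castAdd :
    withIncreasingTail T hT σ ∘ Fin.castAdd m = T.orderEmbOfFin hT ∘ σ :=
  funext withIncreasingTail_castAdd

lemma strictMono_withIncreasingTail_comp_natAdd :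
    StrictMono (withIncreasingTail T hT σ ∘ Fin.natAdd k) := by
  rw [show _ ∘ _ = _ from funext withIncreasingTail_natAdd]
  exact (orderEmbOfFin _ _).strictMono

lemma ascents_withIncreasingTail_comp_castAdd :
    ascents (withIncreasingTail T hT σ ∘ Fin.castAdd m) = ascents σ := by
  rw [withIncreasingTail_comp_castAdd, ascents_comp_of_strictMono (T.orderEmbOfFin hT).strictMono]

lemma image_withIncreasingTail_castAdd :
    univ.image (withIncreasingTail T hT σ ∘ Fin.castAdd m) = T := by
  rw [withIncreasingTail_comp_castAdd, ← image_image, image_univ_equiv, image_orderEmbOfFin_univ]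

lemma withIncreasingTail_injective {T' : Finset (Fin (k + m))} {hT' : #T' = k}
    {σ' : Perm (Fin k)} (h : withIncreasingTail T hT σ = withIncreasingTail T' hT' σ') :
    T = T' ∧ σ = σ' := by
  obtain rfl : T = T' := by
    rw [← image_withIncreasingTail_castAdd (hT := hT) (σ := σ), h,
      image_withIncreasingTail_castAdd]
  refine ⟨rfl, Equiv.ext fun i => (T.orderEmbOfFin hT).injective ?_⟩
  simpa only [withIncreasingTail_castAdd] using DFunLike.congr_fun h (Fin.castAdd m i)

lemma exists_withIncreasingTail_eq (π : Perm (Fin (k + m)))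
    (hπ : StrictMono (π ∘ Fin.natAdd k)) :
    ∃ (T : Finset (Fin (k + m))) (hT : #T = k) (σ : Perm (Fin k)),
      withIncreasingTail T hT σ = π := by
  set T := univ.image (π ∘ Fin.castAdd m)
  have hT : #T = k := by
    rw [card_image_of_injective _ (π.injective.comp (Fin.castAdd_injective k m)), card_univ,
      Fintype.card_fin]
  have hmem (i : Fin k) : π (Fin.castAdd m i) ∈ T := mem_image_of_mem _ (mem_univ i)
  let σ : Perm (Fin k) := Equiv.ofBijective (fun i => (T.orderIsoOfFin hT).symm ⟨_, hmem i⟩) <|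
    Finite.injective_iff_bijective.1 fun i j hij => Fin.castAdd_injective k m <|
      π.injective (congrArg Subtype.val ((T.orderIsoOfFin hT).symm.injective hij))
  refine ⟨T, hT, σ, Equiv.ext (Fin.addCases (fun i => ?_) (fun j => ?_))⟩
  · rw [withIncreasingTail_castAdd, ← coe_orderIsoOfFin_apply]
    simp [σ]
  · have htail : π ∘ Fin.natAdd k = Tᶜ.orderEmbOfFin (card_compl_of_card_eq hT) := by
      refine orderEmbOfFin_unique _ (fun j => mem_compl.2 fun hj => ?_) hπ
      obtain ⟨i, -, hi⟩ := mem_image.1 hj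
      have := congrArg Fin.val (π.injective hi)
      simp only [Fin.val_castAdd, Fin.val_natAdd] at this
      omega
    rw [withIncreasingTail_natAdd, ← htail, Function.comp_apply]

end IncreasingTail

def permsWithAscentsAt (n : ℕ) (S : Finset ℕ) : Finset (Perm (Fin n)) :=
  univ.filter fun π => S ⊆ ascents π

lemma card_permsWithAscentsAt_union_Ico {k m : ℕ} {S : Finset ℕ} (hS : S ⊆ range (k - 1)) :
    #(permsWithAscentsAt (k + m) (S ∪ Ico k (k + m - 1))) =
      (k + m).choose k * #(permsWithAscentsAt k S) := by
  have hchoose : (k + m).choose k = #(powersetCard k (univ : Finset (Fin (k + m)))) := by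
    rw [card_powersetCard, card_univ, Fintype.card_fin]
  rw [hchoose, ← card_product]
  symm
  refine card_bij
    (fun p hp => withIncreasingTail p.1 (mem_powersetCard.1 (mem_product.1 hp).1).2 p.2)
    (fun p hp => ?_) (fun p hp p' hp' h => ?_) (fun π hπ => ?_)
  · simp only [permsWithAscentsAt, mem_product, mem_filter, mem_univ, true_and] at hp ⊢
    rw [union_Ico_subset_ascents_iff hS, ascents_withIncreasingTail_comp_castAdd]
    exact ⟨hp.2, strictMono_withIncreasingTail_comp_natAdd⟩
  · obtain ⟨h₁, h₂⟩ := withIncreasingTail_injective h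
    exact Prod.ext h₁ h₂
  · simp only [permsWithAscentsAt, mem_filter, mem_univ, true_and] at hπ
    rw [union_Ico_subset_ascents_iff hS] at hπ
    obtain ⟨T, hT, σ, rfl⟩ := exists_withIncreasingTail_eq π hπ.2
    rw [ascents_withIncreasingTail_comp_castAdd] at hπ
    exact ⟨(T, σ), by simp [permsWithAscentsAt, hT, hπ.1], rfl⟩

lemma eulerianPoly_eq_sum_perm (n : ℕ) (t : ℝ) :
    eulerianPoly n t = ∑ π : Perm (Fin n), t ^ ascentCount π := by
  rcases Nat.eq_zero_or_pos n with rfl | hn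
  · simp [eulerianPoly, ascentCount]
  have hmaps : ∀ π ∈ (univ : Finset (Perm (Fin n))), ascentCount π ∈ range n :=
    fun π _ => mem_range.2 ((ascentCount_le π).trans_lt (Nat.sub_lt hn one_pos))
  rw [eulerianPoly, if_neg hn.ne', ← sum_fiberwise_of_maps_to hmaps]
  refine sum_congr rfl fun k _ => ?_
  rw [sum_congr rfl fun π hπ => by rw [(mem_filter.1 hπ).2], sum_const, nsmul_eq_mul, eulerian]

lemma eulerianPoly_eq_sum_powerset (n : ℕ) (t : ℝ) :
    eulerianPoly n t =
      ∑ S ∈ (range (n - 1)).powerset, (t - 1) ^ #S * #(permsWithAscentsAt n S) := by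
  have hpow (A : Finset ℕ) : t ^ #A = ∑ S ∈ A.powerset, (t - 1) ^ #S := by
    simpa using (sum_pow_mul_eq_add_pow (t - 1) 1 A).symm
  simp only [eulerianPoly_eq_sum_perm, ascentCount_eq_card_ascents, hpow]
  rw [sum_comm' (t' := (range (n - 1)).powerset) (s' := permsWithAscentsAt n) fun π S => ?_]
  · simp [mul_comm]
  simp only [mem_univ, mem_powerset, true_and, permsWithAscentsAt, mem_filter]
  exact ⟨fun h => ⟨h, h.trans (ascents_subset_range π)⟩, fun h => h.1⟩

/-- Decomposes a set containing `Ico N c` according to where its final run of consecutive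
integers begins. -/
lemma sum_powerset_range_union_Ico {M : Type*} [AddCommMonoid M] (g : Finset ℕ → M) {N c : ℕ}
    (hN : N ≤ c) :
    ∑ S ∈ (range N).powerset, g (S ∪ Ico N c) =
      ∑ k ∈ range (N + 1), ∑ S ∈ (range (k - 1)).powerset, g (S ∪ Ico k c) := by
  induction N with
  | zero => simp
  | succ N ih =>
    rw [range_add_one, sum_powerset_insert notMem_range_self, sum_range_succ, add_comm,
      ← ih (by omega), Nat.add_sub_cancel]
    congr 1
    refine sum_congr rfl fun S _ => ?_
    rw [insert_union, ← union_insert, insert_Ico_add_one_left_eq_Ico (by omega)]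

lemma eulerianPoly_succ (n : ℕ) (t : ℝ) :
    eulerianPoly (n + 1) t =
      ∑ k ∈ range (n + 1), ((n + 1).choose k : ℝ) * (t - 1) ^ (n - k) * eulerianPoly k t := by
  rw [eulerianPoly_eq_sum_powerset, Nat.add_sub_cancel]
  conv_lhs => enter [2, S]; rw [← union_empty S, ← Ico_self n]
  rw [sum_powerset_range_union_Ico
    (fun S => (t - 1) ^ #S * (#(permsWithAscentsAt (n + 1) S) : ℝ)) le_rfl]
  refine sum_congr rfl fun k hk => ?_
  obtain ⟨m, rfl⟩ := Nat.exists_eq_add_of_le (Nat.lt_succ_iff.1 (mem_range.1 hk))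
  rw [eulerianPoly_eq_sum_powerset, mul_sum]
  refine sum_congr rfl fun S hS => ?_
  rw [mem_powerset] at hS
  have hdisj : Disjoint S (Ico k (k + m)) := disjoint_left.2 fun j hj hj' => by
    have := mem_range.1 (hS hj)
    have := (mem_Ico.1 hj').1
    omega
  have hcount := card_permsWithAscentsAt_union_Ico (m := m + 1) hS
  rw [show k + (m + 1) - 1 = k + m by omega] at hcount
  rw [card_union_of_disjoint hdisj, Nat.card_Ico, add_assoc, hcount, Nat.add_sub_cancel_left]
  push_cast
  ring

lemma sum_choose_mul_eulerianPoly (n : ℕ) (t : ℝ) :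
    ∑ k ∈ range (n + 1), (n.choose k : ℝ) * (t - 1) ^ (n - k) * eulerianPoly k t =
      t * eulerianPoly n t - if n = 0 then t - 1 else 0 := by
  cases n with
  | zero => simp [eulerianPoly]
  | succ n =>
    have htail : ∑ k ∈ range (n + 1), ((n + 1).choose k : ℝ) * (t - 1) ^ (n + 1 - k) *
        eulerianPoly k t = (t - 1) * eulerianPoly (n + 1) t := by
      rw [eulerianPoly_succ, mul_sum]
      refine sum_congr rfl fun k hk => ?_
      rw [Nat.sub_add_comm (Nat.lt_succ_iff.1 (mem_range.1 hk)), pow_succ]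
      ring
    rw [sum_range_succ, htail, Nat.choose_self, Nat.sub_self, if_neg (Nat.succ_ne_zero n)]
    ring

lemma abs_eulerianPoly_le (n : ℕ) (t : ℝ) : |eulerianPoly n t| ≤ n ! * max 1 |t| ^ n := by
  calc |eulerianPoly n t|
      ≤ ∑ π : Perm (Fin n), |t| ^ ascentCount π := by
        rw [eulerianPoly_eq_sum_perm]
        simpa only [abs_pow] using
          abs_sum_le_sum_abs (fun π : Perm (Fin n) => t ^ ascentCount π) univ
    _ ≤ ∑ _π : Perm (Fin n), max 1 |t| ^ n := by
        gcongr with π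
        exact (pow_le_pow_left₀ (abs_nonneg t) (le_max_right 1 |t|) _).trans
          (pow_le_pow_right₀ (le_max_left 1 |t|) ((ascentCount_le π).trans (Nat.sub_le n 1)))
    _ = n ! * max 1 |t| ^ n := by
        rw [sum_const, card_univ, Fintype.card_perm, Fintype.card_fin, nsmul_eq_mul]

lemma eulerianPoly_egf_mul_exp_coeff (t u : ℝ) (n : ℕ) :
    ∑ k ∈ range (n + 1), eulerianPoly k t * u ^ k / k ! * ((u * (t - 1)) ^ (n - k) / (n - k)!) =
      t * (eulerianPoly n t * u ^ n / n !) - if n = 0 then t - 1 else 0 := by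
  have hterm : ∀ k ∈ range (n + 1),
      eulerianPoly k t * u ^ k / k ! * ((u * (t - 1)) ^ (n - k) / (n - k)!) =
        n.choose k * (t - 1) ^ (n - k) * eulerianPoly k t * (u ^ n / n !) := fun k hk => by
    have hkn := Nat.lt_succ_iff.1 (mem_range.1 hk)
    rw [Nat.cast_choose ℝ hkn, mul_pow, ← Nat.add_sub_cancel' hkn, pow_add,
      Nat.add_sub_cancel_left]
    field_simp
  rw [sum_congr rfl hterm, ← sum_mul, sum_choose_mul_eulerianPoly]
  split_ifs with hn
  · simp [hn, eulerianPoly]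
  · ring

lemma summable_norm_eulerianPoly_egf {t u : ℝ} (hu : max 1 |t| * |u| < 1) :
    Summable fun n => ‖eulerianPoly n t * u ^ n / (n ! : ℝ)‖ := by
  refine Summable.of_nonneg_of_le (fun n => norm_nonneg _) (fun n => ?_)
    (summable_geometric_of_lt_one (by positivity) hu)
  rw [Real.norm_eq_abs, abs_div, abs_mul, abs_pow, Nat.abs_cast, mul_pow,
    div_le_iff₀ (by positivity)]
  calc |eulerianPoly n t| * |u| ^ n ≤ n ! * max 1 |t| ^ n * |u| ^ n := by
        gcongr
        exact abs_eulerianPoly_le n t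
    _ = _ := by ring

theorem eulerianPoly_egf_general (t : ℝ) :
    ∃ ε > 0, ∀ u : ℝ, |u| < ε → t ≠ Real.exp (u * (t - 1)) →
      HasSum (fun n : ℕ => eulerianPoly n t * u ^ n / (n.factorial : ℝ))
        ((t - 1) / (t - Real.exp (u * (t - 1)))) := by
  have hC : 0 < max 1 |t| := lt_max_of_lt_left one_pos
  refine ⟨(max 1 |t|)⁻¹, inv_pos.2 hC, fun u hu hne => ?_⟩
  have hf := summable_norm_eulerianPoly_egf (by rwa [← lt_inv_mul_iff₀ hC, mul_one])
  have hexp : HasSum (fun n => (u * (t - 1)) ^ n / n !) (Real.exp (u * (t - 1))) := by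
    rw [Real.exp_eq_exp_ℝ]
    exact NormedSpace.expSeries_div_hasSum_exp (u * (t - 1))
  have hexp_norm : Summable fun n => ‖(u * (t - 1)) ^ n / (n ! : ℝ)‖ := by
    simpa [abs_div, abs_pow] using Real.summable_pow_div_factorial |u * (t - 1)|
  set F := ∑' n, eulerianPoly n t * u ^ n / (n ! : ℝ)
  have hprod : F * Real.exp (u * (t - 1)) = t * F - (t - 1) := by
    rw [← hexp.tsum_eq, tsum_mul_tsum_eq_tsum_sum_range_of_summable_norm hf hexp_norm]
    simp only [eulerianPoly_egf_mul_exp_coeff]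
    rw [Summable.tsum_sub (hf.of_norm.mul_left t) (hasSum_ite_eq 0 (t - 1)).summable,
      tsum_mul_left, tsum_ite_eq]
  have hF : F = (t - 1) / (t - Real.exp (u * (t - 1))) := by
    rw [eq_div_iff (sub_ne_zero.2 hne)]
    linarith
  exact hF ▸ hf.of_norm.hasSum

/-- Exponential generating function of the Eulerian polynomials: for `t ≠ 1` and all
sufficiently small `u` with `t ≠ exp(u(t-1))`, the series `∑_{n≥0} A_n(t) u^n/n!`
converges to `(t-1)/(t - exp(u(t-1)))`. -/
theorem eulerianPoly_egf (t : ℝ) (ht : t ≠ 1) :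
    ∃ ε > 0, ∀ u : ℝ, |u| < ε → t ≠ Real.exp (u * (t - 1)) →
      HasSum (fun n : ℕ => eulerianPoly n t * u ^ n / (n.factorial : ℝ))
        ((t - 1) / (t - Real.exp (u * (t - 1)))) :=
  eulerianPoly_egf_general t
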